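/- Let lp be a coherent conditional lower prevision on C ⊆ C(X) and let E be its natural extension, defined by E(f|B) := lp_{E(lp)}(f|B) for all (f,B) ∈ C(X). Then E is a coherent conditional lower prevision on C(X) that coincides with lp on C, and E is pointwise smallest with this property: for any coherent conditional lower prevision lp' on C(X) that coincides with lp on C, one has E(f|B) ≤ lp'(f|B) for all (f,B) ∈ C(X). -/

import Mathlib

open scoped BigOperators

namespace IPaper

variable {X : Type*}

/-- A gamble on `X`: a bounded real-valued function. -/
def IsGamble (f : X → ℝ) : Prop := ∃ M : ℝ, ∀ x, |f x| ≤ M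

/-- The indicator gamble of an event. -/
noncomputable def ind (B : Set X) : X → ℝ := Set.indicator B 1

/-- The set `G_{>0}(X)` of nonnegative nonzero gambles. -/
def Gpos (X : Type*) : Set (X → ℝ) := {f | IsGamble f ∧ 0 ≤ f ∧ f ≠ 0}

/-- A coherent set of desirable gambles. -/
structure CoherentSDG (D : Set (X → ℝ)) : Prop where
  subset_gambles : ∀ f ∈ D, IsGamble f
  d1 : ∀ f : X → ℝ, IsGamble f → 0 ≤ f → f ≠ 0 → f ∈ D
  d2 : ∀ f ∈ D, ∀ l : ℝ, 0 < l → l • f ∈ D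
  d3 : ∀ f ∈ D, ∀ g ∈ D, f + g ∈ D
  d4 : ∀ f : X → ℝ, f ≤ 0 → f ∉ D

/-- `posi A`: positive linear hull of `A`. -/
def posi (A : Set (X → ℝ)) : Set (X → ℝ) :=
  {g | ∃ (n : ℕ) (l : Fin (n + 1) → ℝ) (h : Fin (n + 1) → X → ℝ),
    (∀ i, 0 < l i) ∧ (∀ i, h i ∈ A) ∧ g = ∑ i, l i • h i}

/-- `E(A) := posi (A ∪ G_{>0}(X))`. -/
def natExtSet (A : Set (X → ℝ)) : Set (X → ℝ) := posi (A ∪ Gpos X)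

/-- `C(X)`: all pairs of a gamble and a nonempty event. -/
def domC (X : Type*) : Set ((X → ℝ) × Set X) := {p | IsGamble p.1 ∧ p.2.Nonempty}

/-- The conditional lower prevision `lp_D` derived from a set of gambles `D`. -/
noncomputable def lpOf (D : Set (X → ℝ)) (f : X → ℝ) (B : Set X) : EReal :=
  sSup (Real.toEReal '' {m : ℝ | (fun x => (f x - m) * ind B x) ∈ D})

/-- Coherence (Williams) of a conditional lower prevision on a domain `C`. -/
def Coherent (C : Set ((X → ℝ) × Set X)) (lp : (X → ℝ) → Set X → EReal) : Prop :=
  ∃ D : Set (X → ℝ), CoherentSDG D ∧ ∀ p ∈ C, lp p.1 p.2 = lpOf D p.1 p.2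

/-- The set `A_lp`. -/
def Alp (C : Set ((X → ℝ) × Set X)) (lp : (X → ℝ) → Set X → EReal) : Set (X → ℝ) :=
  {g | ∃ p ∈ C, ∃ m : ℝ, (m : EReal) < lp p.1 p.2 ∧ g = fun x => (p.1 x - m) * ind p.2 x}

/-- `E(lp) := E(A_lp)`. -/
def ElpSet (C : Set ((X → ℝ) × Set X)) (lp : (X → ℝ) → Set X → EReal) : Set (X → ℝ) :=
  natExtSet (Alp C lp)

/-- The natural extension of `lp` to all of `C(X)`. -/
noncomputable def natExtLP (C : Set ((X → ℝ) × Set X)) (lp : (X → ℝ) → Set X → EReal)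
    (f : X → ℝ) (B : Set X) : EReal :=
  lpOf (ElpSet C lp) f B

/-- Simple `B`-measurable gamble. -/
def SimpleMeas (Bfam : Set (Set X)) (g : X → ℝ) : Prop :=
  ∃ (c0 : ℝ) (n : ℕ) (c : Fin n → ℝ) (Bs : Fin n → Set X),
    0 ≤ c0 ∧ (∀ i, 0 ≤ c i) ∧ (∀ i, Bs i ∈ Bfam) ∧
    g = fun x => c0 + ∑ i, c i * ind (Bs i) x

/-- `B`-measurable gamble: uniform limit of nonnegative simple `B`-measurable gambles. -/
def BMeas (Bfam : Set (Set X)) (g : X → ℝ) : Prop :=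
  ∃ gs : ℕ → X → ℝ, (∀ n, 0 ≤ gs n ∧ SimpleMeas Bfam (gs n)) ∧
    TendstoUniformly gs g Filter.atTop

/-- A conditional linear prevision on `C(X)`: a coherent self-conjugate conditional
lower prevision on the full domain. -/
def CondLinPrev (P : (X → ℝ) → Set X → EReal) : Prop :=
  Coherent (domC X) P ∧ ∀ p ∈ domC X, P p.1 p.2 = -P (-p.1) p.2

section Product

variable {X1 X2 : Type*}

/-- `A_{1→2}`. -/
def A12 (D2 : Set (X2 → ℝ)) (F1 : Set (Set X1)) : Set (X1 × X2 → ℝ) :=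
  {g | ∃ f2 ∈ D2, ∃ B1 ∈ F1 ∪ {Set.univ}, g = fun p => f2 p.2 * ind B1 p.1}

/-- `A_{2→1}`. -/
def A21 (D1 : Set (X1 → ℝ)) (F2 : Set (Set X2)) : Set (X1 × X2 → ℝ) :=
  {g | ∃ f1 ∈ D1, ∃ B2 ∈ F2 ∪ {Set.univ}, g = fun p => f1 p.1 * ind B2 p.2}

/-- `D1 ⊗ D2`, relative to the families of conditioning events `F1`, `F2`. -/
def indNatExt (D1 : Set (X1 → ℝ)) (D2 : Set (X2 → ℝ))
    (F1 : Set (Set X1)) (F2 : Set (Set X2)) : Set (X1 × X2 → ℝ) :=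
  natExtSet (A12 D2 F1 ∪ A21 D1 F2)

/-- `marg_1(D)`. -/
def marg1 (D : Set (X1 × X2 → ℝ)) : Set (X1 → ℝ) :=
  {f | IsGamble f ∧ (fun p : X1 × X2 => f p.1) ∈ D}

/-- `marg_2(D)`. -/
def marg2 (D : Set (X1 × X2 → ℝ)) : Set (X2 → ℝ) :=
  {f | IsGamble f ∧ (fun p : X1 × X2 => f p.2) ∈ D}

/-- `marg_1(D|B2)`. -/
def marg1c (D : Set (X1 × X2 → ℝ)) (B2 : Set X2) : Set (X1 → ℝ) :=
  {f | IsGamble f ∧ (fun p : X1 × X2 => f p.1 * ind B2 p.2) ∈ D}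

/-- `marg_2(D|B1)`. -/
def marg2c (D : Set (X1 × X2 → ℝ)) (B1 : Set X1) : Set (X2 → ℝ) :=
  {f | IsGamble f ∧ (fun p : X1 × X2 => f p.2 * ind B1 p.1) ∈ D}

/-- Epistemic independence of a set of desirable gambles on `X1 × X2`. -/
def EpIndSDG (F1 : Set (Set X1)) (F2 : Set (Set X2)) (D : Set (X1 × X2 → ℝ)) : Prop :=
  (∀ B2 ∈ F2, marg1c D B2 = marg1 D) ∧ (∀ B1 ∈ F1, marg2c D B1 = marg2 D)

/-- Independent product (of sets of desirable gambles). -/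
def IndProductSDG (F1 : Set (Set X1)) (F2 : Set (Set X2))
    (D1 : Set (X1 → ℝ)) (D2 : Set (X2 → ℝ)) (D : Set (X1 × X2 → ℝ)) : Prop :=
  CoherentSDG D ∧ EpIndSDG F1 F2 D ∧ marg1 D = D1 ∧ marg2 D = D2

/-- The independent natural extension `lp1 ⊗ lp2` on `C(X1 × X2)`. -/
noncomputable def lpProd (C1 : Set ((X1 → ℝ) × Set X1)) (lp1 : (X1 → ℝ) → Set X1 → EReal)
    (C2 : Set ((X2 → ℝ) × Set X2)) (lp2 : (X2 → ℝ) → Set X2 → EReal)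
    (F1 : Set (Set X1)) (F2 : Set (Set X2)) :
    (X1 × X2 → ℝ) → Set (X1 × X2) → EReal :=
  lpOf (indNatExt (ElpSet C1 lp1) (ElpSet C2 lp2) F1 F2)

/-- An independent domain `C ⊆ C(X1 × X2)`. -/
def IndepDomain (F1 : Set (Set X1)) (F2 : Set (Set X2))
    (C : Set ((X1 × X2 → ℝ) × Set (X1 × X2))) : Prop :=
  (∀ (f1 : X1 → ℝ) (B1 : Set X1), IsGamble f1 → B1.Nonempty → ∀ B2 ∈ F2,
    (((fun p : X1 × X2 => f1 p.1), B1 ×ˢ (Set.univ : Set X2)) ∈ C ↔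
      ((fun p : X1 × X2 => f1 p.1), B1 ×ˢ B2) ∈ C)) ∧
  (∀ (f2 : X2 → ℝ) (B2 : Set X2), IsGamble f2 → B2.Nonempty → ∀ B1 ∈ F1,
    (((fun p : X1 × X2 => f2 p.2), (Set.univ : Set X1) ×ˢ B2) ∈ C ↔
      ((fun p : X1 × X2 => f2 p.2), B1 ×ˢ B2) ∈ C))

/-- Epistemic independence of a conditional lower prevision on a domain `C`. -/
def EpIndLP (F1 : Set (Set X1)) (F2 : Set (Set X2))
    (C : Set ((X1 × X2 → ℝ) × Set (X1 × X2)))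
    (lp : (X1 × X2 → ℝ) → Set (X1 × X2) → EReal) : Prop :=
  (∀ (f1 : X1 → ℝ) (B1 : Set X1), IsGamble f1 → B1.Nonempty →
    ((fun p : X1 × X2 => f1 p.1), B1 ×ˢ (Set.univ : Set X2)) ∈ C → ∀ B2 ∈ F2,
    lp (fun p : X1 × X2 => f1 p.1) (B1 ×ˢ (Set.univ : Set X2)) =
      lp (fun p : X1 × X2 => f1 p.1) (B1 ×ˢ B2)) ∧
  (∀ (f2 : X2 → ℝ) (B2 : Set X2), IsGamble f2 → B2.Nonempty →
    ((fun p : X1 × X2 => f2 p.2), (Set.univ : Set X1) ×ˢ B2) ∈ C → ∀ B1 ∈ F1,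
    lp (fun p : X1 × X2 => f2 p.2) ((Set.univ : Set X1) ×ˢ B2) =
      lp (fun p : X1 × X2 => f2 p.2) (B1 ×ˢ B2))

/-- Independent product of two conditional lower previsions, on the joint domain `C`. -/
def IndProductLP (F1 : Set (Set X1)) (F2 : Set (Set X2))
    (C1 : Set ((X1 → ℝ) × Set X1)) (lp1 : (X1 → ℝ) → Set X1 → EReal)
    (C2 : Set ((X2 → ℝ) × Set X2)) (lp2 : (X2 → ℝ) → Set X2 → EReal)
    (C : Set ((X1 × X2 → ℝ) × Set (X1 × X2)))
    (lp : (X1 × X2 → ℝ) → Set (X1 × X2) → EReal) : Prop :=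
  Coherent C lp ∧ EpIndLP F1 F2 C lp ∧
  (∀ p ∈ C1, lp (fun q : X1 × X2 => p.1 q.1) (p.2 ×ˢ (Set.univ : Set X2)) = lp1 p.1 p.2) ∧
  (∀ p ∈ C2, lp (fun q : X1 × X2 => p.1 q.2) ((Set.univ : Set X1) ×ˢ p.2) = lp2 p.1 p.2)

end Product


/-! Every coherent set `D` whose `lpOf` agrees with `lp` on `C` contains `A_lp`, hence, being closed
under positive combinations, contains `E(lp)`; so `E(lp)` is coherent and its lower prevision lies
below every coherent extension. Conversely `A_lp ⊆ E(lp)` gives `lp ≤ lpOf E(lp)` on `C`. -/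

lemma subset_posi (A : Set (X → ℝ)) : A ⊆ posi A := fun g hg =>
  ⟨0, fun _ => 1, fun _ => g, fun _ => one_pos, fun _ => hg, by simp⟩

lemma smul_mem_posi {A : Set (X → ℝ)} {g : X → ℝ} (hg : g ∈ posi A) {c : ℝ} (hc : 0 < c) :
    c • g ∈ posi A := by
  obtain ⟨n, l, h, hl, hh, rfl⟩ := hg
  refine ⟨n, fun i => c * l i, h, fun i => mul_pos hc (hl i), hh, ?_⟩
  simp [Finset.smul_sum, smul_smul]

lemma add_mem_posi {A : Set (X → ℝ)} {g₁ g₂ : X → ℝ} (h₁ : g₁ ∈ posi A) (h₂ : g₂ ∈ posi A) :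
    g₁ + g₂ ∈ posi A := by
  obtain ⟨n, l, h, hl, hh, rfl⟩ := h₁
  obtain ⟨m, l', h', hl', hh', rfl⟩ := h₂
  refine ⟨n + 1 + m, (Fin.append l l' : Fin ((n + 1) + (m + 1)) → ℝ),
    (Fin.append h h' : Fin ((n + 1) + (m + 1)) → X → ℝ), fun i => ?_, fun i => ?_, ?_⟩
  · exact Fin.addCases (motive := fun i => 0 < Fin.append l l' i)
      (fun i => by simpa using hl i) (fun i => by simpa using hl' i) i
  · exact Fin.addCases (motive := fun i => Fin.append h h' i ∈ A)
      (fun i => by simpa using hh i) (fun i => by simpa using hh' i) i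
  · have hsplit : ∑ i : Fin ((n + 1) + (m + 1)), Fin.append l l' i • Fin.append h h' i
        = (∑ i, l i • h i) + ∑ i, l' i • h' i := by
      simp [Fin.sum_univ_add]
    exact hsplit.symm

lemma CoherentSDG.posi_subset {A D : Set (X → ℝ)} (hD : CoherentSDG D) (hAD : A ⊆ D) :
    posi A ⊆ D := by
  rintro g ⟨n, l, h, hl, hh, rfl⟩
  exact Finset.sum_induction_nonempty _ (· ∈ D) (fun f g hf hg => hD.d3 f hf g hg)
    Finset.univ_nonempty fun i _ => hD.d2 _ (hAD (hh i)) _ (hl i)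

lemma CoherentSDG.natExtSet_subset {A D : Set (X → ℝ)} (hD : CoherentSDG D) (hAD : A ⊆ D) :
    natExtSet A ⊆ D :=
  hD.posi_subset <| Set.union_subset hAD fun g hg => hD.d1 g hg.1 hg.2.1 hg.2.2

lemma CoherentSDG.natExtSet {A D : Set (X → ℝ)} (hD : CoherentSDG D) (hAD : A ⊆ D) :
    CoherentSDG (natExtSet A) where
  subset_gambles f hf := hD.subset_gambles f (hD.natExtSet_subset hAD hf)
  d1 _ hf h0 hne := subset_posi _ (Or.inr ⟨hf, h0, hne⟩)
  d2 _ hf _ hl := smul_mem_posi hf hl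
  d3 _ hf _ hg := add_mem_posi hf hg
  d4 f hf hmem := hD.d4 f hf (hD.natExtSet_subset hAD hmem)

lemma lpOf_mono {D₁ D₂ : Set (X → ℝ)} (h : D₁ ⊆ D₂) (f : X → ℝ) (B : Set X) :
    lpOf D₁ f B ≤ lpOf D₂ f B :=
  sSup_le_sSup (Set.image_mono fun _ hm => h hm)

lemma sSup_coe_lt_eq (L : EReal) : sSup (Real.toEReal '' {m : ℝ | (m : EReal) < L}) = L :=
  le_antisymm (sSup_le <| by rintro _ ⟨m, hm, rfl⟩; exact hm.le) <|
    le_of_forall_lt fun c hc => by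
      obtain ⟨m, hcm, hmL⟩ := EReal.exists_between_coe_real hc
      exact hcm.trans_le (le_sSup ⟨m, hmL, rfl⟩)

lemma CoherentSDG.const_mul_ind_mem {D : Set (X → ℝ)} (hD : CoherentSDG D) {B : Set X}
    (hB : B.Nonempty) {c : ℝ} (hc : 0 < c) : (fun x => c * ind B x) ∈ D := by
  have hind : ∀ x, ind B x = 0 ∨ ind B x = 1 := fun x => Set.indicator_eq_zero_or_self B 1 x
  refine hD.d1 _ ⟨c, fun x => ?_⟩ (fun x => ?_) fun h0 => ?_
  · rcases hind x with hx | hx <;> simp [hx, abs_of_pos hc, hc.le]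
  · rcases hind x with hx | hx <;> simp [hx, hc.le]
  · obtain ⟨b, hb⟩ := hB
    have := congrFun h0 b
    simp only [ind, Set.indicator_of_mem hb, Pi.one_apply, mul_one, Pi.zero_apply] at this
    exact hc.ne' this

lemma CoherentSDG.mem_of_lt_lpOf {D : Set (X → ℝ)} (hD : CoherentSDG D) {f : X → ℝ}
    {B : Set X} (hB : B.Nonempty) {m : ℝ} (hm : (m : EReal) < lpOf D f B) :
    (fun x => (f x - m) * ind B x) ∈ D := by
  obtain ⟨_, ⟨μ, hμ, rfl⟩, hmμ⟩ := lt_sSup_iff.mp hm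
  have hsum := hD.d3 _ hμ _ (hD.const_mul_ind_mem hB (sub_pos.mpr (EReal.coe_lt_coe_iff.mp hmμ)))
  convert hsum using 1
  funext x
  simp only [Pi.add_apply]
  ring

lemma Alp_subset {C : Set ((X → ℝ) × Set X)} (hC : C ⊆ domC X)
    {lp : (X → ℝ) → Set X → EReal} {D : Set (X → ℝ)} (hD : CoherentSDG D)
    (hlp : ∀ p ∈ C, lp p.1 p.2 = lpOf D p.1 p.2) : Alp C lp ⊆ D := by
  rintro g ⟨p, hp, m, hm, rfl⟩
  rw [hlp p hp] at hm
  exact hD.mem_of_lt_lpOf (hC hp).2 hm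

lemma natExtLP_le_lpOf {C : Set ((X → ℝ) × Set X)} (hC : C ⊆ domC X)
    {lp : (X → ℝ) → Set X → EReal} {D : Set (X → ℝ)} (hD : CoherentSDG D)
    (hlp : ∀ p ∈ C, lp p.1 p.2 = lpOf D p.1 p.2) (f : X → ℝ) (B : Set X) :
    natExtLP C lp f B ≤ lpOf D f B :=
  lpOf_mono (hD.natExtSet_subset (Alp_subset hC hD hlp)) f B

lemma le_natExtLP {C : Set ((X → ℝ) × Set X)} {lp : (X → ℝ) → Set X → EReal}
    {p : (X → ℝ) × Set X} (hp : p ∈ C) : lp p.1 p.2 ≤ natExtLP C lp p.1 p.2 := by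
  conv_lhs => rw [← sSup_coe_lt_eq (lp p.1 p.2)]
  exact sSup_le_sSup <| Set.image_mono fun m hm => subset_posi _ (Or.inl ⟨p, hp, m, hm, rfl⟩)

theorem stmt4_general {X : Type*} (C : Set ((X → ℝ) × Set X)) (hC : C ⊆ domC X)
    (lp : (X → ℝ) → Set X → EReal) (hlp : Coherent C lp) :
    Coherent (domC X) (natExtLP C lp) ∧
    (∀ p ∈ C, natExtLP C lp p.1 p.2 = lp p.1 p.2) ∧
    (∀ lp' : (X → ℝ) → Set X → EReal, Coherent (domC X) lp' →
      (∀ p ∈ C, lp' p.1 p.2 = lp p.1 p.2) →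
      ∀ p ∈ domC X, natExtLP C lp p.1 p.2 ≤ lp' p.1 p.2) := by
  obtain ⟨D, hD, hDlp⟩ := hlp
  refine ⟨⟨ElpSet C lp, hD.natExtSet (Alp_subset hC hD hDlp), fun _ _ => rfl⟩,
    fun p hp => le_antisymm ?_ (le_natExtLP hp), ?_⟩
  · rw [hDlp p hp]
    exact natExtLP_le_lpOf hC hD hDlp p.1 p.2
  · rintro lp' ⟨D', hD', hD'lp'⟩ hlp' p hp
    rw [hD'lp' p hp]
    exact natExtLP_le_lpOf hC hD' (fun q hq => (hlp' q hq).symm.trans (hD'lp' q (hC hq))) p.1 p.2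

/-- Proposition 5: the natural extension is the pointwise smallest
coherent extension of `lp` to all of `C(X)`. -/
theorem stmt4 {X : Type*} [Nonempty X] (C : Set ((X → ℝ) × Set X)) (hC : C ⊆ domC X)
    (lp : (X → ℝ) → Set X → EReal) (hlp : Coherent C lp) :
    Coherent (domC X) (natExtLP C lp) ∧
    (∀ p ∈ C, natExtLP C lp p.1 p.2 = lp p.1 p.2) ∧
    (∀ lp' : (X → ℝ) → Set X → EReal, Coherent (domC X) lp' →
      (∀ p ∈ C, lp' p.1 p.2 = lp p.1 p.2) →
      ∀ p ∈ domC X, natExtLP C lp p.1 p.2 ≤ lp' p.1 p.2) :=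
  stmt4_general C hC lp hlp

end IPaper
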